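/- (Noncommutative Laurent Phenomenon, qualitative form.) For every integer n ≥ 2, every triangulation Δ of [n], and all distinct i,j ∈ [n], the element x_{ij} of 𝒜_n belongs to the ℚ-subalgebra of 𝒜_n generated by the set {x_{kl} : (k,l) ∈ Δ} ∪ {x_{kl}⁻¹ : (k,l) ∈ Δ}. -/

import Mathlib

open scoped Classical

noncomputable section

namespace NCPolygon

/-- Cyclic successor on `Fin n` (the vertices of the `n`-gon in cyclic order). -/
def csucc {n : ℕ} (i : Fin n) : Fin n :=
  ⟨(i.1 + 1) % n, Nat.mod_lt _ (Nat.lt_of_le_of_lt (Nat.zero_le _) i.isLt)⟩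

/-- Cyclic predecessor on `Fin n`. -/
def cpred {n : ℕ} (i : Fin n) : Fin n :=
  ⟨(i.1 + (n - 1)) % n, Nat.mod_lt _ (Nat.lt_of_le_of_lt (Nat.zero_le _) i.isLt)⟩

/-- A list of elements of `Fin n` is *cyclic* if its entries are distinct and some
cyclic rotation of it is strictly increasing. -/
def IsCyclicSeq {n : ℕ} (l : List (Fin n)) : Prop :=
  l.Nodup ∧ ∃ k : ℕ, (l.rotate k).Pairwise (· < ·)

/-- The pair `(i,k)` crosses `(j,l)` iff `(i,j,k,l)` is cyclic. -/
def Crosses {n : ℕ} (p q : Fin n × Fin n) : Prop :=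
  IsCyclicSeq [p.1, q.1, p.2, q.2]

def NonCrossing {n : ℕ} (Δ : Set (Fin n × Fin n)) : Prop :=
  (∀ p ∈ Δ, p.1 ≠ p.2) ∧ ∀ p ∈ Δ, ∀ q ∈ Δ, ¬ Crosses p q

/-- A triangulation of the `n`-gon: a maximal crossing-free set of (directed) chords. -/
def IsTriangulation {n : ℕ} (Δ : Set (Fin n × Fin n)) : Prop :=
  NonCrossing Δ ∧ ∀ Δ' : Set (Fin n × Fin n), NonCrossing Δ' → Δ ⊆ Δ' → Δ' = Δ

/-! ### The noncommutative polygon algebra `𝒜_n` -/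

abbrev OffD (n : ℕ) := {p : Fin n × Fin n // p.1 ≠ p.2}

abbrev AGen (n : ℕ) := OffD n ⊕ OffD n

def xF {n : ℕ} (i j : Fin n) : FreeAlgebra ℚ (AGen n) :=
  if h : i ≠ j then FreeAlgebra.ι ℚ (Sum.inl ⟨(i, j), h⟩) else 1

def xiF {n : ℕ} (i j : Fin n) : FreeAlgebra ℚ (AGen n) :=
  if h : i ≠ j then FreeAlgebra.ι ℚ (Sum.inr ⟨(i, j), h⟩) else 1

/-- The defining relations of `𝒜_n`: invertibility, triangle, and exchange relations. -/
inductive ARel (n : ℕ) : FreeAlgebra ℚ (AGen n) → FreeAlgebra ℚ (AGen n) → Prop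
  | mul_inv {i j : Fin n} (h : i ≠ j) : ARel n (xF i j * xiF i j) 1
  | inv_mul {i j : Fin n} (h : i ≠ j) : ARel n (xiF i j * xF i j) 1
  | triangle {i j k : Fin n} (hij : i ≠ j) (hik : i ≠ k) (hjk : j ≠ k) :
      ARel n (xF i j * xiF k j * xF k i) (xF i k * xiF j k * xF j i)
  | exchange {i j k l : Fin n} (h : IsCyclicSeq [i, j, k, l]) :
      ARel n (xF j l) (xF j k * xiF i k * xF i l + xF j i * xiF k i * xF k l)

/-- The noncommutative `n`-gon algebra `𝒜_n`. -/
abbrev NCPoly (n : ℕ) := RingQuot (ARel n)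

/-- The generator `x_{ij} ∈ 𝒜_n` (junk value `1` when `i = j`). -/
def X {n : ℕ} (i j : Fin n) : NCPoly n :=
  RingQuot.mkAlgHom ℚ (ARel n) (xF i j)

/-- The generator `x_{ij}⁻¹ ∈ 𝒜_n`. -/
def Xinv {n : ℕ} (i j : Fin n) : NCPoly n :=
  RingQuot.mkAlgHom ℚ (ARel n) (xiF i j)

/-- The noncommutative angle `T_i^{jk} = x_{ji}⁻¹ x_{jk} x_{ik}⁻¹ ∈ 𝒜_n`. -/
def Tang {n : ℕ} (i j k : Fin n) : NCPoly n := Xinv j i * X j k * Xinv i k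

/-! ### Triangle groups -/

def tF {n : ℕ} (Δ : Set (Fin n × Fin n)) (i j : Fin n) : FreeGroup Δ :=
  if h : (i, j) ∈ Δ then FreeGroup.of (⟨(i, j), h⟩ : Δ) else 1

/-- The triangle relations of the triangle group `𝕋_Δ`. -/
def triRels {n : ℕ} (Δ : Set (Fin n × Fin n)) : Set (FreeGroup Δ) :=
  { w | ∃ i j k : Fin n, i ≠ j ∧ i ≠ k ∧ j ≠ k ∧
      (i, j) ∈ Δ ∧ (j, i) ∈ Δ ∧ (i, k) ∈ Δ ∧ (k, i) ∈ Δ ∧ (j, k) ∈ Δ ∧ (k, j) ∈ Δ ∧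
      w = tF Δ i j * (tF Δ k j)⁻¹ * tF Δ k i *
        (tF Δ i k * (tF Δ j k)⁻¹ * tF Δ j i)⁻¹ }

/-- The triangle group `𝕋_Δ` of a triangulation `Δ`. -/
abbrev TriGroup {n : ℕ} (Δ : Set (Fin n × Fin n)) := PresentedGroup (triRels Δ)

/-- The generator `t_{ij} ∈ 𝕋_Δ` (junk value `1` when `(i,j) ∉ Δ`). -/
def tG {n : ℕ} (Δ : Set (Fin n × Fin n)) (i j : Fin n) : TriGroup Δ :=
  if h : (i, j) ∈ Δ then PresentedGroup.of (rels := triRels Δ) ⟨(i, j), h⟩ else 1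

/-! ### The big triangle group `𝕋_n` -/

def btF {n : ℕ} (i j : Fin n) : FreeGroup (OffD n) :=
  if h : i ≠ j then FreeGroup.of (⟨(i, j), h⟩ : OffD n) else 1

def bigRels (n : ℕ) : Set (FreeGroup (OffD n)) :=
  { w | ∃ i j k : Fin n, i ≠ j ∧ i ≠ k ∧ j ≠ k ∧
      w = btF i j * (btF k j)⁻¹ * btF k i * (btF i k * (btF j k)⁻¹ * btF j i)⁻¹ }

/-- The big triangle group `𝕋_n`. -/
abbrev BigTriGroup (n : ℕ) := PresentedGroup (bigRels n)

/-- The generator `t_{ij} ∈ 𝕋_n`. -/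
def bigT {n : ℕ} (i j : Fin n) : BigTriGroup n :=
  if h : i ≠ j then PresentedGroup.of (rels := bigRels n) ⟨(i, j), h⟩ else 1

/-! ### Distinguished subalgebras and subgroups -/

/-- `𝒜_Δ`: the subalgebra of `𝒜_n` generated by all `x_{ij}` together with the
`x_{ij}⁻¹` for `(i,j) ∈ Δ`. -/
def ADelta (n : ℕ) (Δ : Set (Fin n × Fin n)) : Subalgebra ℚ (NCPoly n) :=
  Algebra.adjoin ℚ
    ({a | ∃ i j : Fin n, i ≠ j ∧ a = X i j} ∪ {a | ∃ p ∈ Δ, a = Xinv p.1 p.2})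

/-- `𝒬_n`: the subalgebra of `𝒜_n` generated by the `y_{ij}^k = x_{ki}⁻¹ x_{kj}`. -/
def Qn (n : ℕ) : Subalgebra ℚ (NCPoly n) :=
  Algebra.adjoin ℚ
    {a : NCPoly n | ∃ i j k : Fin n, i ≠ j ∧ i ≠ k ∧ j ≠ k ∧ a = Xinv k i * X k j}

/-- `𝕌_Δ`: the subgroup of `𝕋_Δ` generated by the `u_{ij}^k = t_{ki}⁻¹ t_{kj}`. -/
def UDelta {n : ℕ} (Δ : Set (Fin n × Fin n)) : Subgroup (TriGroup Δ) :=
  Subgroup.closure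
    {g | ∃ i j k : Fin n, (k, i) ∈ Δ ∧ (k, j) ∈ Δ ∧ g = (tG Δ k i)⁻¹ * tG Δ k j}

/-!
Induct on the number of chords of `Δ` crossed by `(u, v)`. If there are none, `(u, v) ∈ Δ` by
maximality of `Δ`. Otherwise pick a crossed chord `(a, c) ∈ Δ`, so that `(a, u, c, v)` is cyclic;
the exchange relation gives `x_{uv} = x_{uc} x_{ac}⁻¹ x_{av} + x_{ua} x_{ca}⁻¹ x_{cv}`, and each
of the four sides crosses only chords of `Δ` that `(u, v)` crosses, but not `(a, c)`.
-/

def IsCyclic4 (a b c d : ℕ) : Prop :=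
  (a < b ∧ b < c ∧ c < d) ∨ (b < c ∧ c < d ∧ d < a) ∨ (c < d ∧ d < a ∧ a < b) ∨
    (d < a ∧ a < b ∧ b < c)

def StrictlyBetween (x u v : ℕ) : Prop := min u v < x ∧ x < max u v

/-- The chord `{u, v}` separates `p` from `q`. Unlike `IsCyclic4`, this interval form is cheap
for `omega`. -/
def Interleaved (u v p q : ℕ) : Prop :=
  p ≠ u ∧ p ≠ v ∧ q ≠ u ∧ q ≠ v ∧
    (StrictlyBetween p u v ∧ ¬StrictlyBetween q u v ∨
      StrictlyBetween q u v ∧ ¬StrictlyBetween p u v)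

lemma isCyclic4_rotate {a b c d : ℕ} (h : IsCyclic4 a b c d) : IsCyclic4 b c d a := by
  unfold IsCyclic4 at *; omega

lemma interleaved_iff {u v p q : ℕ} :
    Interleaved u v p q ↔ IsCyclic4 u p v q ∨ IsCyclic4 p u q v :=
  Iff.symm (by unfold Interleaved StrictlyBetween IsCyclic4; omega)

lemma interleaved_comm {u v p q : ℕ} : Interleaved u v p q ↔ Interleaved v u p q := by
  unfold Interleaved StrictlyBetween; omega

/-- A chord crossing a side of the quadrilateral `a u c v` but not its diagonal `{a, c}` crosses
the other diagonal `{u, v}`. -/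
lemma interleaved_of_isCyclic4_of_side {a u c v w z p q : ℕ} (h : IsCyclic4 a u c v)
    (hw : w = u ∨ w = v) (hz : z = a ∨ z = c) (hac : ¬Interleaved a c p q)
    (hwz : Interleaved w z p q) : Interleaved u v p q := by
  unfold Interleaved StrictlyBetween IsCyclic4 at *
  rcases hw with rfl | rfl <;> rcases hz with rfl | rfl <;> omega

section Polygon

variable {n : ℕ}

lemma isCyclicSeq_of_pairwise_rotate {l : List (Fin n)} (k : ℕ)
    (h : (l.rotate k).Pairwise (· < ·)) : IsCyclicSeq l :=
  ⟨List.nodup_rotate.mp h.nodup, k, h⟩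

lemma isCyclicSeq_iff (a b c d : Fin n) : IsCyclicSeq [a, b, c, d] ↔ IsCyclic4 a b c d := by
  constructor
  · rintro ⟨-, k, hk⟩
    rw [← List.rotate_mod] at hk
    have : k % 4 < 4 := Nat.mod_lt _ (by norm_num)
    generalize k % 4 = r at hk this
    interval_cases r <;> simp [List.rotate_cons_succ] at hk <;> unfold IsCyclic4 <;> omega
  · rintro (h | h | h | h)
    · exact isCyclicSeq_of_pairwise_rotate 0 (by simp; omega)
    · exact isCyclicSeq_of_pairwise_rotate 1 (by simp [List.rotate_cons_succ]; omega)
    · exact isCyclicSeq_of_pairwise_rotate 2 (by simp [List.rotate_cons_succ]; omega)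
    · exact isCyclicSeq_of_pairwise_rotate 3 (by simp [List.rotate_cons_succ]; omega)

lemma crosses_iff (p q : Fin n × Fin n) : Crosses p q ↔ IsCyclic4 p.1 q.1 p.2 q.2 :=
  isCyclicSeq_iff _ _ _ _

variable {Δ : Set (Fin n × Fin n)}

lemma NonCrossing.not_interleaved (hΔ : NonCrossing Δ) {p q : Fin n × Fin n} (hp : p ∈ Δ)
    (hq : q ∈ Δ) : ¬Interleaved p.1 p.2 q.1 q.2 := by
  rw [interleaved_iff]
  rintro (h | h)
  · exact hΔ.2 p hp q hq ((crosses_iff p q).2 h)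
  · exact hΔ.2 q hq p hp ((crosses_iff q p).2 h)

lemma NonCrossing.insert (hΔ : NonCrossing Δ) {u v : Fin n} (huv : u ≠ v)
    (hfree : ∀ r ∈ Δ, ¬Interleaved u v r.1 r.2) : NonCrossing (insert (u, v) Δ) := by
  refine ⟨?_, ?_⟩
  · rintro p (rfl | hp)
    exacts [huv, hΔ.1 p hp]
  · rintro p (rfl | hp) q (rfl | hq) hcross <;> rw [crosses_iff] at hcross
    · unfold IsCyclic4 at hcross; omega
    · exact hfree q hq (interleaved_iff.2 (Or.inl hcross))
    · exact hfree p hp (interleaved_iff.2 (Or.inr hcross))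
    · exact hΔ.2 p hp q hq ((crosses_iff p q).2 hcross)

lemma IsTriangulation.mem_of_forall_not_interleaved (hΔ : IsTriangulation Δ) {u v : Fin n}
    (huv : u ≠ v) (hfree : ∀ r ∈ Δ, ¬Interleaved u v r.1 r.2) : (u, v) ∈ Δ :=
  hΔ.2 _ (hΔ.1.insert huv hfree) (Set.subset_insert _ _) ▸ Set.mem_insert _ _

lemma IsTriangulation.swap_mem (hΔ : IsTriangulation Δ) {u v : Fin n} (h : (u, v) ∈ Δ) :
    (v, u) ∈ Δ :=
  hΔ.mem_of_forall_not_interleaved (hΔ.1.1 _ h).symm fun _ hr hvu =>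
    hΔ.1.not_interleaved h hr (interleaved_comm.1 hvu)

variable (Δ) in
def crossedChords (u v : Fin n) : Set (Fin n × Fin n) :=
  {r ∈ Δ | Interleaved u v r.1 r.2}

lemma crossedChords_comm (u v : Fin n) : crossedChords Δ u v = crossedChords Δ v u := by
  simp only [crossedChords, interleaved_comm (u := u.val)]

lemma ncard_crossedChords_side_lt (hΔ : NonCrossing Δ) {a c u v w z : Fin n}
    (hac : (a, c) ∈ Δ) (h : IsCyclic4 a u c v) (hw : w = u ∨ w = v) (hz : z = a ∨ z = c) :
    (crossedChords Δ w z).ncard < (crossedChords Δ u v).ncard := by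
  have hw' : w.val = u ∨ w.val = v := by rcases hw with rfl | rfl <;> simp
  have hz' : z.val = a ∨ z.val = c := by rcases hz with rfl | rfl <;> simp
  refine Set.ncard_lt_ncard ⟨fun r ⟨hr, hwz⟩ => ⟨hr, ?_⟩, fun hsub => ?_⟩ 
    (Set.toFinite _)
  · exact interleaved_of_isCyclic4_of_side h hw' hz' (hΔ.not_interleaved hac hr) hwz
  · have hac_uv : Interleaved u v a c := interleaved_iff.2 (Or.inr h)
    have hwz_ac : ¬Interleaved w z a c := by unfold Interleaved; omega
    exact hwz_ac (hsub ⟨hac, hac_uv⟩).2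

lemma X_exchange {i j k l : Fin n} (h : IsCyclicSeq [i, j, k, l]) :
    X j l = X j k * Xinv i k * X i l + X j i * Xinv k i * X k l := by
  simpa only [X, Xinv, map_add, map_mul] using RingQuot.mkAlgHom_rel ℚ (ARel.exchange h)

variable (Δ) in
def clusterAdjoin : Subalgebra ℚ (NCPoly n) :=
  Algebra.adjoin ℚ ({a | ∃ p ∈ Δ, a = X p.1 p.2} ∪ {a | ∃ p ∈ Δ, a = Xinv p.1 p.2})

lemma X_mem_clusterAdjoin_of_mem {i j : Fin n} (h : (i, j) ∈ Δ) : X i j ∈ clusterAdjoin Δ :=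
  Algebra.subset_adjoin (Or.inl ⟨(i, j), h, rfl⟩)

lemma Xinv_mem_clusterAdjoin_of_mem {i j : Fin n} (h : (i, j) ∈ Δ) :
    Xinv i j ∈ clusterAdjoin Δ :=
  Algebra.subset_adjoin (Or.inr ⟨(i, j), h, rfl⟩)

theorem X_mem_clusterAdjoin (hΔ : IsTriangulation Δ) {u v : Fin n} (huv : u ≠ v) :
    X u v ∈ clusterAdjoin Δ := by
  induction hm : (crossedChords Δ u v).ncard using Nat.strong_induction_on generalizing u v with
  | _ m ih =>
  obtain hempty | ⟨⟨k, l⟩, hkl, hcross⟩ := (crossedChords Δ u v).eq_empty_or_nonempty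
  · exact X_mem_clusterAdjoin_of_mem <|
      hΔ.mem_of_forall_not_interleaved huv fun _ hr h => hempty.subset ⟨hr, h⟩
  obtain ⟨a, c, hac, hca, hcyc⟩ :
      ∃ a c : Fin n, (a, c) ∈ Δ ∧ (c, a) ∈ Δ ∧ IsCyclic4 a u c v := by
    rcases interleaved_iff.1 hcross with h | h
    · exact ⟨l, k, hΔ.swap_mem hkl, hkl,
        isCyclic4_rotate (isCyclic4_rotate (isCyclic4_rotate h))⟩
    · exact ⟨k, l, hkl, hΔ.swap_mem hkl, h⟩
  have hside : ∀ w z : Fin n, (w = u ∨ w = v) → (z = a ∨ z = c) →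
      X w z ∈ clusterAdjoin Δ ∧ X z w ∈ clusterAdjoin Δ := by
    intro w z hw hz
    have hwz : w ≠ z := by
      rcases hw with rfl | rfl <;> rcases hz with rfl | rfl <;> intro h <;>
        rw [h] at hcyc <;> unfold IsCyclic4 at hcyc <;> omega
    have hlt := hm ▸ ncard_crossedChords_side_lt hΔ.1 hac hcyc hw hz
    exact ⟨ih _ hlt hwz rfl, ih _ (crossedChords_comm w z ▸ hlt) hwz.symm rfl⟩
  rw [X_exchange ((isCyclicSeq_iff a u c v).2 hcyc)]
  exact add_mem
    (mul_mem (mul_mem (hside u c (.inl rfl) (.inr rfl)).1 (Xinv_mem_clusterAdjoin_of_mem hac))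
      (hside v a (.inr rfl) (.inl rfl)).2)
    (mul_mem (mul_mem (hside u a (.inl rfl) (.inl rfl)).1 (Xinv_mem_clusterAdjoin_of_mem hca))
      (hside v c (.inr rfl) (.inr rfl)).2)

end Polygon

theorem noncommutative_laurent_general (n : ℕ) (Δ : Set (Fin n × Fin n))
    (hΔ : IsTriangulation Δ) (i j : Fin n) (hij : i ≠ j) :
    X i j ∈ Algebra.adjoin ℚ
      (({a | ∃ p ∈ Δ, a = X p.1 p.2} ∪ {a | ∃ p ∈ Δ, a = Xinv p.1 p.2}) :
        Set (NCPoly n)) :=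
  X_mem_clusterAdjoin hΔ hij

/-- **Noncommutative Laurent Phenomenon.** For every triangulation `Δ` of
`[n]` and all distinct `i, j`, the element `x_{ij}` lies in the subalgebra of `𝒜_n`
generated by the `x_{kl}` and `x_{kl}⁻¹` with `(k,l) ∈ Δ`. -/
theorem noncommutative_laurent (n : ℕ) (hn : 2 ≤ n) (Δ : Set (Fin n × Fin n))
    (hΔ : IsTriangulation Δ) (i j : Fin n) (hij : i ≠ j) :
    X i j ∈ Algebra.adjoin ℚ
      (({a | ∃ p ∈ Δ, a = X p.1 p.2} ∪ {a | ∃ p ∈ Δ, a = Xinv p.1 p.2}) :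
        Set (NCPoly n)) :=
  noncommutative_laurent_general n Δ hΔ i j hij

end NCPolygon
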